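/- For all nonnegative integers m, n and real x > 0, Bel_{n+m,λ}(x) = ∑_{k=0}^{n} ∑_{j=0}^{m} C(n,k) · S_{2,λ}(m,j) · Bel_{k,λ}(x) · ((j − mλ)_{n−k,λ}) · x^j, where (j − mλ)_{n−k,λ} is the degenerate falling factorial of j − mλ. -/

import Mathlib

open Finset

/-- Degenerate falling factorial `(y)_{r,λ}`. -/
noncomputable def degFall (lam x : ℝ) (n : ℕ) : ℝ := ∏ i ∈ Finset.range n, (x - i * lam)

/-- Ordinary falling factorial `(x)_k`. -/
noncomputable def fall (x : ℝ) (k : ℕ) : ℝ := ∏ i ∈ Finset.range k, (x - i)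

/-!
The Dobinski functional `f ↦ e^{-x} ∑ᵢ f(i) xⁱ / i!` sends the falling factorial `(·)_k` to `x^k`,
hence `(·)_{n,λ}` to `Bel_{n,λ}(x)`, and more generally `(·)_j · g(· - j)` to `x^j` times the image
of `g`. Apply it to `(i)_{n+m,λ} = (i)_{m,λ} (i - mλ)_{n,λ}`, expanding the first factor in falling
factorials `(i)_j` and the second by the degenerate binomial theorem at `(i - j) + (j - mλ)`.
-/

open Nat

lemma degFall_succ (lam y : ℝ) (n : ℕ) :
    degFall lam y (n + 1) = degFall lam y n * (y - n * lam) :=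
  prod_range_succ _ _

lemma degFall_add (lam y : ℝ) (m n : ℕ) :
    degFall lam y (m + n) = degFall lam y m * degFall lam (y - m * lam) n := by
  rw [degFall, prod_range_add]
  congr 1
  exact prod_congr rfl fun i _ => by push_cast; ring

lemma degFall_add_eq_sum_choose (lam a b : ℝ) (n : ℕ) :
    degFall lam (a + b) n =
      ∑ i ∈ range (n + 1), (n.choose i : ℝ) * (degFall lam a i * degFall lam b (n - i)) := by
  induction n with
  | zero => simp [degFall]
  | succ n ih =>
    rw [sum_choose_succ_mul (fun i j => degFall lam a i * degFall lam b j), ← sum_add_distrib,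
      degFall_succ, ih, sum_mul]
    refine sum_congr rfl fun i hi => ?_
    have hin : i ≤ n := Nat.lt_succ_iff.mp (mem_range.mp hi)
    rw [Nat.sub_add_comm hin, degFall_succ, degFall_succ, Nat.cast_sub hin]
    ring

lemma fall_natCast (n k : ℕ) : fall n k = n.descFactorial k := by
  rw [fall, ← descPochhammer_eval_eq_prod_range, descPochhammer_eval_eq_descFactorial]

lemma hasSum_fall_mul_comp_sub {g : ℝ → ℝ} {x a : ℝ} (j : ℕ)
    (hg : HasSum (fun t : ℕ => g t * x ^ t / t !) a) :
    HasSum (fun i : ℕ => fall i j * g (i - j) * x ^ i / i !) (x ^ j * a) := by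
  rw [← hasSum_nat_add_iff' j]
  have hlow : ∑ i ∈ range j, fall i j * g (i - j) * x ^ i / i ! = 0 :=
    sum_eq_zero fun i hi => by
      rw [fall_natCast, Nat.descFactorial_eq_zero_iff_lt.mpr (mem_range.mp hi)]
      simp
  rw [hlow, sub_zero]
  refine (hg.mul_left (x ^ j)).congr_fun fun t => ?_
  have hfac : (t ! : ℝ) * (t + j).descFactorial j = (t + j)! := by
    exact_mod_cast Nat.add_sub_cancel t j ▸ Nat.factorial_mul_descFactorial (Nat.le_add_left j t)
  rw [fall_natCast, ← hfac]
  push_cast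
  have : (t ! : ℝ) ≠ 0 := by positivity
  have : ((t + j).descFactorial j : ℝ) ≠ 0 := by
    exact_mod_cast (Nat.descFactorial_pos.mpr (Nat.le_add_left j t)).ne'
  field_simp
  rw [add_sub_cancel_right, pow_add]
  ring

lemma hasSum_fall_mul_pow_div_factorial (x : ℝ) (k : ℕ) :
    HasSum (fun i : ℕ => fall i k * x ^ i / i !) (x ^ k * Real.exp x) := by
  simpa using hasSum_fall_mul_comp_sub (g := fun _ => 1) k
    (by simpa [Real.exp_eq_exp_ℝ] using NormedSpace.expSeries_div_hasSum_exp x)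

lemma hasSum_sum_mul_fall (c : ℕ → ℝ) (s : Finset ℕ) (x : ℝ) :
    HasSum (fun i : ℕ => (∑ k ∈ s, c k * fall i k) * x ^ i / i !)
      (Real.exp x * ∑ k ∈ s, c k * x ^ k) := by
  simp_rw [sum_mul, sum_div, mul_sum]
  refine hasSum_sum fun k _ => ?_
  rw [mul_left_comm, ← mul_comm (x ^ k)]
  exact ((hasSum_fall_mul_pow_div_factorial x k).mul_left (c k)).congr_fun fun i => by ring

def degBell (S2 : ℕ → ℕ → ℝ) (n : ℕ) (x : ℝ) : ℝ := ∑ k ∈ range (n + 1), S2 n k * x ^ k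

section

variable {lam : ℝ} {S2 : ℕ → ℕ → ℝ}

lemma hasSum_degFall_mul_pow_div_factorial
    (hS2 : ∀ (n : ℕ) (x : ℝ), degFall lam x n = ∑ k ∈ range (n + 1), S2 n k * fall x k)
    (x : ℝ) (n : ℕ) :
    HasSum (fun i : ℕ => degFall lam i n * x ^ i / i !) (Real.exp x * degBell S2 n x) := by
  simp_rw [hS2]
  exact hasSum_sum_mul_fall _ _ x

lemma degFall_add_eq_sum
    (hS2 : ∀ (n : ℕ) (x : ℝ), degFall lam x n = ∑ k ∈ range (n + 1), S2 n k * fall x k)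
    (y : ℝ) (m n : ℕ) :
    degFall lam y (m + n) = ∑ j ∈ range (m + 1), ∑ k ∈ range (n + 1),
      S2 m j * n.choose k * degFall lam (j - m * lam) (n - k) *
        (fall y j * degFall lam (y - j) k) := by
  rw [degFall_add, hS2 m, sum_mul]
  refine sum_congr rfl fun j _ => ?_
  rw [show y - m * lam = (y - j) + (j - m * lam) by ring, degFall_add_eq_sum_choose, mul_sum]
  exact sum_congr rfl fun k _ => by ring

end

theorem degenerate_bell_add_index_general (lam : ℝ) (S2 : ℕ → ℕ → ℝ)
    (hS2 : ∀ (n : ℕ) (x : ℝ), degFall lam x n = ∑ k ∈ range (n + 1), S2 n k * fall x k)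
    (m n : ℕ) (x : ℝ) :
    ∑ k ∈ range (n + m + 1), S2 (n + m) k * x ^ k =
      ∑ k ∈ range (n + 1), ∑ j ∈ range (m + 1),
        (n.choose k : ℝ) * S2 m j * (∑ i ∈ range (k + 1), S2 k i * x ^ i) *
          degFall lam ((j : ℝ) - m * lam) (n - k) * x ^ j := by
  have hexpand : HasSum (fun i : ℕ => degFall lam i (n + m) * x ^ i / i !)
      (∑ j ∈ range (m + 1), ∑ k ∈ range (n + 1), S2 m j * n.choose k *
        degFall lam (j - m * lam) (n - k) * (x ^ j * (Real.exp x * degBell S2 k x))) := by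
    simp_rw [add_comm n m, degFall_add_eq_sum hS2, sum_mul, sum_div]
    refine hasSum_sum fun j _ => hasSum_sum fun k _ => ?_
    have h := hasSum_fall_mul_comp_sub (g := fun y => degFall lam y k) j
      (hasSum_degFall_mul_pow_div_factorial hS2 x k)
    exact (h.mul_left (S2 m j * n.choose k * degFall lam (j - m * lam) (n - k))).congr_fun
      fun i => by ring
  have hsum := (hasSum_degFall_mul_pow_div_factorial hS2 x (n + m)).unique hexpand
  change degBell S2 (n + m) x = ∑ k ∈ range (n + 1), ∑ j ∈ range (m + 1),
    n.choose k * S2 m j * degBell S2 k x * degFall lam (j - m * lam) (n - k) * x ^ j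
  rw [← mul_right_inj' (Real.exp_ne_zero x), hsum, sum_comm, mul_sum]
  refine sum_congr rfl fun j _ => ?_
  rw [mul_sum]
  exact sum_congr rfl fun k _ => by ring

/-- with `Bel_{n,λ}(x) = ∑_{k=0}^n S_{2,λ}(n,k) x^k`,
`Bel_{n+m,λ}(x) = ∑_{k=0}^n ∑_{j=0}^m C(n,k) S_{2,λ}(m,j) Bel_{k,λ}(x) (j−mλ)_{n−k,λ} x^j`. -/
theorem degenerate_bell_add_index (lam : ℝ) (S2 : ℕ → ℕ → ℝ)
    (hS2 : ∀ (n : ℕ) (x : ℝ), degFall lam x n = ∑ k ∈ range (n + 1), S2 n k * fall x k)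
    (m n : ℕ) (x : ℝ) (hx : 0 < x) :
    ∑ k ∈ range (n + m + 1), S2 (n + m) k * x ^ k =
      ∑ k ∈ range (n + 1), ∑ j ∈ range (m + 1),
        (n.choose k : ℝ) * S2 m j * (∑ i ∈ range (k + 1), S2 k i * x ^ i) *
          degFall lam ((j : ℝ) - m * lam) (n - k) * x ^ j :=
  degenerate_bell_add_index_general lam S2 hS2 m n x
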